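/- arXiv:math/0508438 — 2 statements merged into one kernel-verified Lean document; each statement's English description precedes it below -/
import Mathlib

section
/- Fix i ∈ ℤ. Every partition λ has at most one addable box of residue i and at most one removable box of residue i, and never both an addable and a removable box of residue i. Moreover, (number of addable boxes of residue i of λ) − (number of removable boxes of residue i of λ) = δ_{i,0} − 2 v_i(λ) + v_{i−1}(λ) + v_{i+1}(λ). -/
/-! Attach to row `k` the integer `λ_{k+1} - k`, the residue of the cell just past its end.
These integers strictly decrease with `k`; their set `S` is the Maya diagram of `λ`. Row `k` has
an addable box iff `k = 0` or row `k - 1` is strictly longer, i.e. iff `λ_{k+1} - k + 1 ∉ S`, and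
a removable box iff row `k + 1` is strictly shorter, i.e. iff `λ_{k+1} - k - 1 ∉ S`. So there is
an addable box of residue `i` iff `i ∈ S` and `i + 1 ∉ S`, a removable one iff `i + 1 ∈ S` and
`i ∉ S`, and by injectivity at most one of each.

The boxes of residue `i` lie one in each row `k ≥ -i` with `λ_{k+1} - k > i`, so
`v_i(λ) = #{s ∈ S | s > i} - max(-i, 0)`. The second difference of the first term is
`[i ∈ S] - [i + 1 ∈ S]`; that of `max(-i, 0)` is `δ_{i,0}`, which cancels. -/

/-- A partition: a non-increasing, eventually-zero sequence of non-negative integers.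
`part k` is the `(k+1)`-st part `λ_{k+1}`. -/
structure PartitionSeq : Type where
  part : ℕ → ℕ
  mono : ∀ k, part (k + 1) ≤ part k
  ev_zero : ∃ N : ℕ, ∀ k, N ≤ k → part k = 0

namespace PartitionSeq

/-- The Young diagram of a partition: the box `b = (j, k)` in column `j ≥ 0` and row
`k ≥ 0` belongs to the diagram iff `j < λ_{k+1}`. -/
def diagram (lam : PartitionSeq) : Set (ℕ × ℕ) := {b | b.1 < lam.part b.2}

/-- The size `|λ| = Σ_i λ_i` of a partition. -/
noncomputable def size (lam : PartitionSeq) : ℕ := ∑ᶠ k : ℕ, lam.part k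

end PartitionSeq

/-- The residue `j - k` of the box `b = (j, k)`. -/
def boxResidue (b : ℕ × ℕ) : ℤ := (b.1 : ℤ) - (b.2 : ℤ)

/-- `v_i(λ)`: the number of boxes of the Young diagram of `λ` of residue `i`. -/
noncomputable def boxCount (lam : PartitionSeq) (i : ℤ) : ℕ :=
  {b ∈ lam.diagram | boxResidue b = i}.ncard

/-- A box `b ∉ D_λ` is addable if adding it yields the Young diagram of a partition. -/
def AddableBox (lam : PartitionSeq) (b : ℕ × ℕ) : Prop :=
  b ∉ lam.diagram ∧ ∃ mu : PartitionSeq, mu.diagram = lam.diagram ∪ {b}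

/-- A box `b ∈ D_λ` is removable if deleting it yields the Young diagram of a
partition. -/
def RemovableBox (lam : PartitionSeq) (b : ℕ × ℕ) : Prop :=
  b ∈ lam.diagram ∧ ∃ mu : PartitionSeq, mu.diagram = lam.diagram \ {b}


open Function

theorem Set.Subsingleton.ncard_eq_ite {α : Type*} {s : Set α} (hs : s.Subsingleton)
    [Decidable s.Nonempty] : s.ncard = if s.Nonempty then 1 else 0 := by
  split_ifs with h
  · obtain ⟨a, ha⟩ := h
    rw [hs.eq_singleton_of_mem ha, Set.ncard_singleton]
  · rw [Set.not_nonempty_iff_eq_empty.1 h, Set.ncard_empty]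

lemma antitone_update_add_one_iff {p : ℕ → ℕ} (hp : Antitone p) (k : ℕ) :
    Antitone (update p k (p k + 1)) ↔ ∀ r, k = r + 1 → p k < p r := by
  constructor
  · rintro h r rfl
    simpa using h (r.le_add_right 1)
  · refine fun h => antitone_nat_of_succ_le fun r => ?_
    have := hp (r.le_add_right 1)
    rcases eq_or_ne r k with rfl | hr
    · rw [update_self, update_of_ne (by omega)]
      omega
    · rcases eq_or_ne k (r + 1) with rfl | hr'
      · simpa using h r rfl
      · rwa [update_of_ne hr, update_of_ne hr'.symm]

lemma antitone_update_sub_one_iff {p : ℕ → ℕ} (hp : Antitone p) {k : ℕ} (hk : 0 < p k) :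
    Antitone (update p k (p k - 1)) ↔ p (k + 1) < p k := by
  constructor
  · intro h
    have := h (k.le_add_right 1)
    rw [update_self, update_of_ne (by omega)] at this
    omega
  · refine fun h => antitone_nat_of_succ_le fun r => ?_
    have := hp (r.le_add_right 1)
    rcases eq_or_ne r k with rfl | hr
    · rw [update_self, update_of_ne (by omega)]
      omega
    · rcases eq_or_ne k (r + 1) with rfl | hr'
      · rw [update_self, update_of_ne hr]
        omega
      · rwa [update_of_ne hr, update_of_ne hr'.symm]

namespace PartitionSeq

variable (lam : PartitionSeq)

lemma part_antitone : Antitone lam.part :=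
  antitone_nat_of_succ_le lam.mono

lemma part_eq_of_diagram_eq {mu : PartitionSeq} {p : ℕ → ℕ}
    (h : mu.diagram = {b | b.1 < p b.2}) : mu.part = p :=
  funext fun r => eq_of_forall_lt_iff fun a => Set.ext_iff.1 h (a, r)

lemma exists_diagram_eq_update_iff (k v : ℕ) :
    (∃ mu : PartitionSeq, mu.diagram = {b | b.1 < update lam.part k v b.2}) ↔
      Antitone (update lam.part k v) := by
  refine ⟨fun ⟨mu, h⟩ => part_eq_of_diagram_eq h ▸ mu.part_antitone, fun h => ?_⟩
  obtain ⟨N, hN⟩ := lam.ev_zero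
  refine ⟨⟨update lam.part k v, fun r => h (r.le_add_right 1), max N (k + 1), fun r hr => ?_⟩,
    rfl⟩
  rw [update_of_ne (by omega)]
  exact hN r (by omega)

lemma diagram_union_singleton (k : ℕ) :
    lam.diagram ∪ {(lam.part k, k)} = {b | b.1 < update lam.part k (lam.part k + 1) b.2} := by
  ext ⟨a, r⟩
  rcases eq_or_ne r k with rfl | hr
  · simp only [diagram, Set.mem_union, Set.mem_singleton_iff, Prod.mk.injEq, and_true,
      Set.mem_ofPred_eq, update_self]
    omega
  · simp [diagram, hr]

lemma diagram_diff_singleton (k : ℕ) :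
    lam.diagram \ {(lam.part k - 1, k)} = {b | b.1 < update lam.part k (lam.part k - 1) b.2} := by
  ext ⟨a, r⟩
  rcases eq_or_ne r k with rfl | hr
  · simp only [diagram, Set.mem_sdiff, Set.mem_singleton_iff, Prod.mk.injEq, and_true,
      Set.mem_ofPred_eq, update_self]
    omega
  · simp [diagram, hr]

lemma eq_part_of_addableBox {j k : ℕ} (h : AddableBox lam (j, k)) : j = lam.part k := by
  obtain ⟨hb, mu, hmu⟩ := h
  have hj : j < mu.part k := (hmu ▸ Or.inr rfl : (j, k) ∈ mu.diagram)
  have hb : ¬j < lam.part k := hb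
  have hk : (lam.part k, k) ∈ lam.diagram ∪ {(j, k)} :=
    hmu ▸ (show lam.part k < mu.part k by omega)
  simpa [diagram, eq_comm] using hk

lemma part_eq_of_removableBox {j k : ℕ} (h : RemovableBox lam (j, k)) : j + 1 = lam.part k := by
  obtain ⟨hb, mu, hmu⟩ := h
  by_contra hne
  have hk : (j + 1, k) ∈ mu.diagram := by
    have hb : j < lam.part k := hb
    rw [hmu]
    exact ⟨show j + 1 < lam.part k by omega, by simp⟩
  have : (j, k) ∈ lam.diagram \ {(j, k)} := hmu ▸ (Nat.lt_of_succ_lt hk : j < mu.part k)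
  exact this.2 rfl

lemma addableBox_part_iff (k : ℕ) :
    AddableBox lam (lam.part k, k) ↔ ∀ r, k = r + 1 → lam.part k < lam.part r := by
  rw [AddableBox, diagram_union_singleton, exists_diagram_eq_update_iff,
    antitone_update_add_one_iff lam.part_antitone]
  simp [diagram]

lemma removableBox_part_sub_one_iff {k : ℕ} (hk : 0 < lam.part k) :
    RemovableBox lam (lam.part k - 1, k) ↔ lam.part (k + 1) < lam.part k := by
  rw [RemovableBox, diagram_diff_singleton, exists_diagram_eq_update_iff,
    antitone_update_sub_one_iff lam.part_antitone hk]
  simp [diagram, hk]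

/-- The residue of the cell `(λ_{k+1}, k)` just past the end of row `k`. -/
def shiftedPart (k : ℕ) : ℤ := lam.part k - k

def mayaDiagram : Set ℤ := Set.range lam.shiftedPart

lemma shiftedPart_strictAnti : StrictAnti lam.shiftedPart :=
  strictAnti_nat_of_succ_lt fun k => by
    have := lam.mono k
    simp only [shiftedPart]
    push_cast
    omega

lemma shiftedPart_add_one_mem_mayaDiagram_iff (k : ℕ) :
    lam.shiftedPart k + 1 ∈ lam.mayaDiagram ↔
      ∃ r, k = r + 1 ∧ lam.part r ≤ lam.part k := by
  constructor
  · rintro ⟨r, hr⟩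
    have hrk : r < k := lam.shiftedPart_strictAnti.lt_iff_gt.1 (by omega)
    have := lam.part_antitone hrk.le
    simp only [shiftedPart] at hr
    exact ⟨r, by omega, by omega⟩
  · rintro ⟨r, rfl, hr⟩
    have := lam.mono r
    refine ⟨r, ?_⟩
    simp only [shiftedPart]
    push_cast
    omega

lemma shiftedPart_sub_one_mem_mayaDiagram_iff (k : ℕ) :
    lam.shiftedPart k - 1 ∈ lam.mayaDiagram ↔ lam.part k ≤ lam.part (k + 1) := by
  constructor
  · rintro ⟨r, hr⟩
    have hkr : k < r := lam.shiftedPart_strictAnti.lt_iff_gt.1 (by omega)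
    have := lam.shiftedPart_strictAnti.antitone (show k + 1 ≤ r from hkr)
    simp only [shiftedPart] at hr this
    push_cast at hr this
    omega
  · intro h
    have := lam.mono k
    refine ⟨k + 1, ?_⟩
    simp only [shiftedPart]
    push_cast
    omega

lemma addableBox_iff (j k : ℕ) :
    AddableBox lam (j, k) ↔ j = lam.part k ∧ lam.shiftedPart k + 1 ∉ lam.mayaDiagram := by
  rw [shiftedPart_add_one_mem_mayaDiagram_iff]
  push Not
  constructor
  · intro h
    obtain rfl := lam.eq_part_of_addableBox h
    exact ⟨rfl, (lam.addableBox_part_iff k).1 h⟩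
  · rintro ⟨rfl, h⟩
    exact (lam.addableBox_part_iff k).2 h

lemma removableBox_iff (j k : ℕ) :
    RemovableBox lam (j, k) ↔
      j + 1 = lam.part k ∧ lam.shiftedPart k - 1 ∉ lam.mayaDiagram := by
  rw [shiftedPart_sub_one_mem_mayaDiagram_iff, not_le]
  constructor
  · intro h
    have hj := lam.part_eq_of_removableBox h
    obtain rfl : j = lam.part k - 1 := by omega
    exact ⟨hj, (lam.removableBox_part_sub_one_iff (by omega)).1 h⟩
  · rintro ⟨hj, h⟩
    obtain rfl : j = lam.part k - 1 := by omega
    exact (lam.removableBox_part_sub_one_iff (by omega)).2 h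

lemma exists_addableBox_residue_iff (i : ℤ) :
    (∃ b, AddableBox lam b ∧ boxResidue b = i) ↔
      i ∈ lam.mayaDiagram ∧ i + 1 ∉ lam.mayaDiagram := by
  constructor
  · rintro ⟨⟨j, k⟩, h, rfl⟩
    obtain ⟨rfl, hk⟩ := (lam.addableBox_iff j k).1 h
    exact ⟨⟨k, rfl⟩, hk⟩
  · rintro ⟨⟨k, rfl⟩, h⟩
    exact ⟨(lam.part k, k), (lam.addableBox_iff _ k).2 ⟨rfl, h⟩, rfl⟩

lemma exists_removableBox_residue_iff (i : ℤ) :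
    (∃ b, RemovableBox lam b ∧ boxResidue b = i) ↔
      i + 1 ∈ lam.mayaDiagram ∧ i ∉ lam.mayaDiagram := by
  constructor
  · rintro ⟨⟨j, k⟩, h, rfl⟩
    obtain ⟨hj, h⟩ := (lam.removableBox_iff j k).1 h
    have hk : boxResidue (j, k) = lam.shiftedPart k - 1 := by
      simp only [boxResidue, shiftedPart]
      omega
    exact ⟨⟨k, by omega⟩, hk ▸ h⟩
  · rintro ⟨⟨k, hk⟩, h⟩
    rw [← add_sub_cancel_right i 1, ← hk] at h
    have hpos : lam.part (k + 1) < lam.part k := by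
      rwa [← not_le, ← shiftedPart_sub_one_mem_mayaDiagram_iff]
    refine ⟨(lam.part k - 1, k), (lam.removableBox_iff _ k).2 ⟨by omega, h⟩, ?_⟩
    simp only [boxResidue, shiftedPart] at hk ⊢
    omega

lemma subsingleton_addableBox_residue (i : ℤ) :
    {b | AddableBox lam b ∧ boxResidue b = i}.Subsingleton := by
  rintro ⟨j, k⟩ ⟨h, hres⟩ ⟨j', k'⟩ ⟨h', hres'⟩
  obtain ⟨rfl, -⟩ := (lam.addableBox_iff j k).1 h
  obtain ⟨rfl, -⟩ := (lam.addableBox_iff j' k').1 h'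
  obtain rfl := lam.shiftedPart_strictAnti.injective (hres.trans hres'.symm)
  rfl

lemma subsingleton_removableBox_residue (i : ℤ) :
    {b | RemovableBox lam b ∧ boxResidue b = i}.Subsingleton := by
  rintro ⟨j, k⟩ ⟨h, hres⟩ ⟨j', k'⟩ ⟨h', hres'⟩
  have hj := ((lam.removableBox_iff j k).1 h).1
  have hj' := ((lam.removableBox_iff j' k').1 h').1
  simp only [boxResidue] at hres hres'
  obtain rfl : k = k' := lam.shiftedPart_strictAnti.injective <| by
    simp only [shiftedPart]
    omega
  simp only [Prod.mk.injEq, and_true]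
  omega

/-- The number of elements of the Maya diagram above `i`. -/
noncomputable def countShiftedPartGt (i : ℤ) : ℕ := {k | i < lam.shiftedPart k}.ncard

lemma finite_setOf_lt_shiftedPart (i : ℤ) : {k | i < lam.shiftedPart k}.Finite :=
  (Set.finite_Iio ((lam.part 0 : ℤ) - i).toNat).subset fun k hk => by
    have : lam.part k ≤ lam.part 0 := lam.part_antitone k.zero_le
    simp only [Set.mem_ofPred_eq, shiftedPart] at hk
    simp only [Set.mem_Iio]
    omega

open Classical in
lemma ncard_setOf_shiftedPart_eq (i : ℤ) :
    {k | lam.shiftedPart k = i}.ncard = if i ∈ lam.mayaDiagram then 1 else 0 := by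
  split_ifs with h
  · obtain ⟨k, rfl⟩ := h
    exact Set.ncard_eq_one.2 ⟨k, Set.ext fun r => lam.shiftedPart_strictAnti.injective.eq_iff⟩
  · exact (congrArg Set.ncard (Set.eq_empty_of_forall_notMem fun k hk => h ⟨k, hk⟩)).trans
      (Set.ncard_empty ℕ)

open Classical in
lemma countShiftedPartGt_sub_one (i : ℤ) :
    lam.countShiftedPartGt (i - 1) =
      lam.countShiftedPartGt i + if i ∈ lam.mayaDiagram then 1 else 0 := by
  have hunion : {k | i - 1 < lam.shiftedPart k} =
      {k | i < lam.shiftedPart k} ∪ {k | lam.shiftedPart k = i} := by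
    ext k
    simp only [Set.mem_ofPred_eq, Set.mem_union]
    omega
  have hdisj : Disjoint {k | i < lam.shiftedPart k} {k | lam.shiftedPart k = i} :=
    Set.disjoint_left.2 fun k hlt heq => by simp_all
  rw [countShiftedPartGt, hunion, Set.ncard_union_eq hdisj (lam.finite_setOf_lt_shiftedPart i)
    ((Set.finite_singleton i).preimage lam.shiftedPart_strictAnti.injective.injOn),
    ncard_setOf_shiftedPart_eq, countShiftedPartGt]

lemma boxCount_add_toNat (i : ℤ) : boxCount lam i + (-i).toNat = lam.countShiftedPartGt i := by
  have hsub : Set.Iio (-i).toNat ⊆ {k | i < lam.shiftedPart k} := fun k hk => by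
    simp only [Set.mem_Iio] at hk
    simp only [Set.mem_ofPred_eq, shiftedPart]
    omega
  have himage : Prod.snd '' {b ∈ lam.diagram | boxResidue b = i} =
      {k | i < lam.shiftedPart k} \ Set.Iio (-i).toNat := by
    ext k
    simp only [Set.mem_image, Set.mem_ofPred_eq, Set.mem_sdiff, Set.mem_Iio, diagram, boxResidue,
      shiftedPart, Prod.exists, exists_eq_right]
    constructor
    · rintro ⟨j, hj, rfl⟩
      omega
    · intro hk
      exact ⟨(k + i).toNat, by omega, by omega⟩
  have hinj : Set.InjOn Prod.snd {b ∈ lam.diagram | boxResidue b = i} := by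
    rintro ⟨j, k⟩ ⟨-, hres⟩ ⟨j', k'⟩ ⟨-, hres'⟩ (rfl : k = k')
    simp only [boxResidue] at hres hres'
    simp only [Prod.mk.injEq, and_true]
    omega
  have := Set.ncard_sdiff_add_ncard_of_subset hsub (lam.finite_setOf_lt_shiftedPart i)
  rwa [Set.ncard_Iio_nat, ← himage, hinj.ncard_image] at this

open Classical in
lemma ncard_addableBox_residue (i : ℤ) :
    {b | AddableBox lam b ∧ boxResidue b = i}.ncard =
      if i ∈ lam.mayaDiagram ∧ i + 1 ∉ lam.mayaDiagram then 1 else 0 := by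
  rw [(lam.subsingleton_addableBox_residue i).ncard_eq_ite]
  exact if_congr (lam.exists_addableBox_residue_iff i) rfl rfl

open Classical in
lemma ncard_removableBox_residue (i : ℤ) :
    {b | RemovableBox lam b ∧ boxResidue b = i}.ncard =
      if i + 1 ∈ lam.mayaDiagram ∧ i ∉ lam.mayaDiagram then 1 else 0 := by
  rw [(lam.subsingleton_removableBox_residue i).ncard_eq_ite]
  exact if_congr (lam.exists_removableBox_residue_iff i) rfl rfl

open Classical in
lemma ncard_addableBox_residue_sub_ncard_removableBox_residue (i : ℤ) :
    ({b | AddableBox lam b ∧ boxResidue b = i}.ncard : ℤ) -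
        {b | RemovableBox lam b ∧ boxResidue b = i}.ncard =
      (if i ∈ lam.mayaDiagram then 1 else 0) - if i + 1 ∈ lam.mayaDiagram then 1 else 0 := by
  rw [ncard_addableBox_residue, ncard_removableBox_residue]
  by_cases hi : i ∈ lam.mayaDiagram <;> by_cases hi_succ : i + 1 ∈ lam.mayaDiagram <;>
    simp [hi, hi_succ]

open Classical in
lemma boxCount_second_difference (i : ℤ) :
    (if i = 0 then 1 else 0) - 2 * (boxCount lam i : ℤ) + boxCount lam (i - 1) +
        boxCount lam (i + 1) =
      (if i ∈ lam.mayaDiagram then 1 else 0) - if i + 1 ∈ lam.mayaDiagram then 1 else 0 := by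
  have hv := lam.boxCount_add_toNat i
  have hv_pred := lam.boxCount_add_toNat (i - 1)
  have hv_succ := lam.boxCount_add_toNat (i + 1)
  have hc := lam.countShiftedPartGt_sub_one i
  have hc_succ := lam.countShiftedPartGt_sub_one (i + 1)
  rw [add_sub_cancel_right] at hc_succ
  split_ifs at hc hc_succ ⊢ <;> omega

end PartitionSeq

/-- every partition has at most one addable and at most one removable box
of residue `i`, never both; and `#{addable of residue i} − #{removable of residue i}
= δ_{i,0} − 2v_i(λ) + v_{i−1}(λ) + v_{i+1}(λ)`. -/
theorem addable_removable (lam : PartitionSeq) (i : ℤ) :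
    {b : ℕ × ℕ | AddableBox lam b ∧ boxResidue b = i}.Subsingleton ∧
    {b : ℕ × ℕ | RemovableBox lam b ∧ boxResidue b = i}.Subsingleton ∧
    ¬((∃ b, AddableBox lam b ∧ boxResidue b = i) ∧
      (∃ b, RemovableBox lam b ∧ boxResidue b = i)) ∧
    ({b : ℕ × ℕ | AddableBox lam b ∧ boxResidue b = i}.ncard : ℤ) -
      ({b : ℕ × ℕ | RemovableBox lam b ∧ boxResidue b = i}.ncard : ℤ)
      = (if i = 0 then 1 else 0) - 2 * (boxCount lam i : ℤ)
          + (boxCount lam (i - 1) : ℤ) + (boxCount lam (i + 1) : ℤ) := by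
  refine ⟨lam.subsingleton_addableBox_residue i, lam.subsingleton_removableBox_residue i,
    fun ⟨ha, hr⟩ => ((lam.exists_addableBox_residue_iff i).1 ha).2
      ((lam.exists_removableBox_residue_iff i).1 hr).1, ?_⟩
  rw [lam.ncard_addableBox_residue_sub_ncard_removableBox_residue, lam.boxCount_second_difference]
end

section
/- With e_i and f_i the box-removal and box-addition operators on the free ℂ-vector space W on the set of partitions, the Serre relations of sl_∞ hold: for |i − j| ≥ 2, e_i e_j = e_j e_i and f_i f_j = f_j f_i; and for |i − j| = 1, e_i² e_j − 2 e_i e_j e_i + e_j e_i² = 0 and f_i² f_j − 2 f_i f_j f_i + f_j f_i² = 0 (as linear operators on W). Together with the Chevalley relations this makes W the basic representation L(ω_0) of sl_∞. -/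
/-- The free `ℂ`-vector space with basis the set of all partitions (the underlying space
of `⊕_λ H_T^{2|λ|}(𝔐(v^λ))`). -/
abbrev PartSpace : Type := PartitionSeq →₀ ℂ

open Classical in
/-- `f_i`: box addition. `f_i(λ) = μ` if `μ` is the (unique) partition obtained from `λ`
by adding a box of residue `i`, and `f_i(λ) = 0` if no such partition exists. -/
noncomputable def fOp (i : ℤ) : PartSpace →ₗ[ℂ] PartSpace :=
  Finsupp.lift PartSpace ℂ PartitionSeq fun lam =>
    if h : ∃ mu : PartitionSeq, ∃ b : ℕ × ℕ,
        boxResidue b = i ∧ b ∉ lam.diagram ∧ mu.diagram = lam.diagram ∪ {b} then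
      Finsupp.single h.choose 1
    else 0

open Classical in
/-- `e_i`: box removal. `e_i(λ) = ν` if `ν` is the (unique) partition obtained from `λ`
by removing a box of residue `i`, and `e_i(λ) = 0` if no such partition exists. -/
noncomputable def eOp (i : ℤ) : PartSpace →ₗ[ℂ] PartSpace :=
  Finsupp.lift PartSpace ℂ PartitionSeq fun lam =>
    if h : ∃ mu : PartitionSeq, ∃ b : ℕ × ℕ,
        boxResidue b = i ∧ b ∈ lam.diagram ∧ mu.diagram = lam.diagram \ {b} then
      Finsupp.single h.choose 1
    else 0

/-- `h_i`: the diagonal operator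
`h_i(λ) = (δ_{i,0} − 2v_i(λ) + v_{i−1}(λ) + v_{i+1}(λ)) λ`. -/
noncomputable def hOp (i : ℤ) : PartSpace →ₗ[ℂ] PartSpace :=
  Finsupp.lift PartSpace ℂ PartitionSeq fun lam =>
    ((((if i = 0 then 1 else 0) - 2 * (boxCount lam i : ℤ)
        + (boxCount lam (i - 1) : ℤ) + (boxCount lam (i + 1) : ℤ) : ℤ) : ℂ)) •
      Finsupp.single lam 1

/-- The `A_∞` Cartan matrix `C_{ij} = 2δ_{ij} − δ_{i−1,j} − δ_{i+1,j}`. -/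
def cartanAInf (i j : ℤ) : ℤ :=
  (if i = j then 2 else 0) - (if i - 1 = j then 1 else 0) - (if i + 1 = j then 1 else 0)

namespace PartitionSeq

theorem ext' {lam mu : PartitionSeq} (h : lam.part = mu.part) : lam = mu := by
  cases lam; cases mu; cases h; rfl

theorem anti (lam : PartitionSeq) : Antitone lam.part :=
  antitone_nat_of_succ_le lam.mono

theorem res_lt (lam : PartitionSeq) {k k' : ℕ} (h : k < k') :
    (lam.part k' : ℤ) - k' < (lam.part k : ℤ) - k := by
  have := lam.anti h.le; omega

theorem res_inj (lam : PartitionSeq) {k k' : ℕ}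
    (h : (lam.part k : ℤ) - k = (lam.part k' : ℤ) - k') : k = k' := by
  rcases lt_trichotomy k k' with h' | h' | h'
  · have := lam.res_lt h'; omega
  · exact h'
  · have := lam.res_lt h'; omega

theorem part_le_of_diagram {lam mu : PartitionSeq} (h : lam.diagram ⊆ mu.diagram) (k : ℕ) :
    lam.part k ≤ mu.part k := by
  rcases Nat.eq_zero_or_pos (lam.part k) with h0 | h0
  · omega
  · have hm : (lam.part k - 1, k) ∈ lam.diagram := by
      simp only [diagram, Set.mem_setOf_eq]; omega
    have := h hm
    simp only [diagram, Set.mem_setOf_eq] at this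
    omega

theorem eq_of_diagram_eq {lam mu : PartitionSeq} (h : lam.diagram = mu.diagram) : lam = mu :=
  ext' (funext fun k => le_antisymm (part_le_of_diagram h.le k) (part_le_of_diagram h.ge k))

theorem part_eq {mu : PartitionSeq} {k n : ℕ} (h : ∀ j, (j, k) ∈ mu.diagram ↔ j < n) :
    mu.part k = n := by
  have h1 := h (mu.part k)
  have h2 := h n
  simp only [diagram, Set.mem_setOf_eq] at h1 h2
  omega

/-- the condition under which a box can be added at the end of row `y`. -/
def AddCond (lam : PartitionSeq) (y : ℕ) : Prop := y = 0 ∨ lam.part y < lam.part (y - 1)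

/-- `λ` has an addable box of residue `i` in row `y`. -/
def AddAt (lam : PartitionSeq) (i : ℤ) (y : ℕ) : Prop :=
  lam.AddCond y ∧ (lam.part y : ℤ) - y = i

/-- the condition under which the last box of row `y` can be removed. -/
def RemCond (lam : PartitionSeq) (y : ℕ) : Prop := lam.part (y + 1) < lam.part y

/-- `λ` has a removable box of residue `i` in row `y`. -/
def RemAt (lam : PartitionSeq) (i : ℤ) (y : ℕ) : Prop :=
  lam.RemCond y ∧ (lam.part y : ℤ) - 1 - y = i

/-- add a box at the end of row `y`. -/
def addRow (lam : PartitionSeq) (y : ℕ) (h : lam.AddCond y) : PartitionSeq where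
  part := Function.update lam.part y (lam.part y + 1)
  mono := by
    intro k
    have h1 := lam.mono k
    simp only [Function.update_apply]
    split_ifs with e1 e2 e2
    · omega
    · subst e1
      rcases h with h | h
      · omega
      · simp only [Nat.add_sub_cancel] at h; omega
    · subst e2; omega
    · exact h1
  ev_zero := by
    obtain ⟨N, hN⟩ := lam.ev_zero
    exact ⟨N + y + 1, fun k hk => by
      rw [Function.update_apply, if_neg (by omega)]; exact hN k (by omega)⟩

theorem addRow_part_self {lam : PartitionSeq} {y : ℕ} (h : lam.AddCond y) :
    (lam.addRow y h).part y = lam.part y + 1 := by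
  simp [addRow]

theorem addRow_part_ne {lam : PartitionSeq} {y : ℕ} (h : lam.AddCond y) {k : ℕ} (hk : k ≠ y) :
    (lam.addRow y h).part k = lam.part k := by
  simp [addRow, Function.update_apply, hk]

theorem addRow_diagram {lam : PartitionSeq} {y : ℕ} (h : lam.AddCond y) :
    (lam.addRow y h).diagram = lam.diagram ∪ {(lam.part y, y)} := by
  ext ⟨a, k⟩
  by_cases hk : k = y
  · subst hk
    simp only [diagram, Set.mem_setOf_eq, Set.mem_union, Set.mem_singleton_iff, Prod.mk.injEq,
      addRow_part_self, and_true]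
    omega
  · simp only [diagram, Set.mem_setOf_eq, Set.mem_union, Set.mem_singleton_iff, Prod.mk.injEq,
      addRow_part_ne h hk, hk, and_false, or_false]

/-- remove the last box of row `y`. -/
def remRow (lam : PartitionSeq) (y : ℕ) (h : lam.RemCond y) : PartitionSeq where
  part := Function.update lam.part y (lam.part y - 1)
  mono := by
    intro k
    have h1 := lam.mono k
    have h2 : lam.part (y + 1) < lam.part y := h
    simp only [Function.update_apply]
    split_ifs with e1 e2 e2
    · omega
    · subst e1; omega
    · subst e2; omega
    · exact h1
  ev_zero := by
    obtain ⟨N, hN⟩ := lam.ev_zero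
    exact ⟨N + y + 1, fun k hk => by
      rw [Function.update_apply, if_neg (by omega)]; exact hN k (by omega)⟩

theorem remRow_part_self {lam : PartitionSeq} {y : ℕ} (h : lam.RemCond y) :
    (lam.remRow y h).part y = lam.part y - 1 := by
  simp [remRow]

theorem remRow_part_ne {lam : PartitionSeq} {y : ℕ} (h : lam.RemCond y) {k : ℕ} (hk : k ≠ y) :
    (lam.remRow y h).part k = lam.part k := by
  simp [remRow, Function.update_apply, hk]

theorem remRow_diagram {lam : PartitionSeq} {y : ℕ} (h : lam.RemCond y) :
    (lam.remRow y h).diagram = lam.diagram \ {(lam.part y - 1, y)} := by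
  have h2 : lam.part (y + 1) < lam.part y := h
  ext ⟨a, k⟩
  by_cases hk : k = y
  · subst hk
    simp only [diagram, Set.mem_setOf_eq, Set.mem_diff, Set.mem_singleton_iff, Prod.mk.injEq,
      remRow_part_self, and_true, not_and]
    constructor
    · intro h'; exact ⟨by omega, by omega⟩
    · intro ⟨h', ha⟩; omega
  · simp only [diagram, Set.mem_setOf_eq, Set.mem_diff, Set.mem_singleton_iff, Prod.mk.injEq,
      remRow_part_ne h hk, hk, and_false, not_false_eq_true, and_true]

end PartitionSeq
namespace PartitionSeq

/-- Any presentation of `μ` as `λ` plus one box is via `addRow`. -/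
theorem add_spec {lam mu : PartitionSeq} {b : ℕ × ℕ} (hb : b ∉ lam.diagram)
    (hd : mu.diagram = lam.diagram ∪ {b}) :
    b.1 = lam.part b.2 ∧ ∃ h : lam.AddCond b.2, mu = lam.addRow b.2 h := by
  obtain ⟨x, k⟩ := b
  simp only [diagram, Set.mem_setOf_eq, not_lt] at hb
  have hxk : (x, k) ∈ mu.diagram := by rw [hd]; exact Or.inr rfl
  simp only [diagram, Set.mem_setOf_eq] at hxk
  -- x = lam.part k
  have hx : x = lam.part k := by
    by_contra hne
    have hlt : lam.part k < x := by omega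
    have : (lam.part k, k) ∈ mu.diagram := by
      simp only [diagram, Set.mem_setOf_eq]; omega
    rw [hd] at this
    rcases this with h' | h'
    · simp only [diagram, Set.mem_setOf_eq] at h'; omega
    · simp only [Set.mem_singleton_iff, Prod.mk.injEq] at h'; omega
  -- mu.part k = x + 1
  have hmuk : mu.part k = lam.part k + 1 := by
    apply part_eq
    intro j
    rw [hd]
    simp only [Set.mem_union, Set.mem_singleton_iff, Prod.mk.injEq, diagram, Set.mem_setOf_eq, and_true, eq_self_iff_true]
    omega
  have hrow : ∀ m, m ≠ k → mu.part m = lam.part m := by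
    intro m hm
    apply part_eq
    intro j
    rw [hd]
    simp only [Set.mem_union, Set.mem_singleton_iff, Prod.mk.injEq, diagram, Set.mem_setOf_eq, and_true, eq_self_iff_true]
    constructor
    · rintro (h' | ⟨-, h'⟩)
      · exact h'
      · exact absurd h' hm
    · exact fun h' => Or.inl h'
  have hcond : lam.AddCond k := by
    rcases Nat.eq_zero_or_pos k with h0 | h0
    · exact Or.inl h0
    · right
      have h1 : mu.part k ≤ mu.part (k - 1) := by
        have := mu.anti (show k - 1 ≤ k by omega)
        exact this
      rw [hmuk, hrow (k - 1) (by omega)] at h1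
      omega
  refine ⟨hx, hcond, eq_of_diagram_eq ?_⟩
  rw [hd, addRow_diagram, hx]

/-- Any presentation of `ν` as `λ` minus one box is via `remRow`. -/
theorem rem_spec {lam nu : PartitionSeq} {b : ℕ × ℕ} (hb : b ∈ lam.diagram)
    (hd : nu.diagram = lam.diagram \ {b}) :
    b.1 + 1 = lam.part b.2 ∧ ∃ h : lam.RemCond b.2, nu = lam.remRow b.2 h := by
  obtain ⟨x, k⟩ := b
  simp only [diagram, Set.mem_setOf_eq] at hb
  have hx : x + 1 = lam.part k := by
    by_contra hne
    have hlt : x + 1 < lam.part k := by omega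
    have h1 : (lam.part k - 1, k) ∈ nu.diagram := by
      rw [hd]
      refine ⟨by simp only [diagram, Set.mem_setOf_eq]; omega, ?_⟩
      simp only [Set.mem_singleton_iff, Prod.mk.injEq]; omega
    have h2 : (x, k) ∉ nu.diagram := by
      rw [hd]
      intro h'
      exact h'.2 rfl
    simp only [diagram, Set.mem_setOf_eq, not_lt] at h1 h2
    omega
  have hnuk : nu.part k = x := by
    apply part_eq
    intro j
    rw [hd]
    simp only [Set.mem_diff, Set.mem_singleton_iff, Prod.mk.injEq, diagram, Set.mem_setOf_eq, and_true, eq_self_iff_true]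
    omega
  have hrow : ∀ m, m ≠ k → nu.part m = lam.part m := by
    intro m hm
    apply part_eq
    intro j
    rw [hd]
    simp only [Set.mem_diff, Set.mem_singleton_iff, Prod.mk.injEq, diagram, Set.mem_setOf_eq, and_true, eq_self_iff_true]
    constructor
    · exact fun h' => h'.1
    · intro h'
      exact ⟨h', fun hh => absurd hh.2 hm⟩
  have hcond : lam.RemCond k := by
    have h1 : nu.part (k + 1) ≤ nu.part k := nu.mono k
    rw [hnuk, hrow (k + 1) (by omega)] at h1
    show lam.part (k + 1) < lam.part k
    omega
  refine ⟨hx, hcond, eq_of_diagram_eq ?_⟩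
  rw [hd, remRow_diagram]
  have : lam.part k - 1 = x := by omega
  rw [this]

end PartitionSeq
open PartitionSeq

open Classical in
theorem fOp_single_eq (i : ℤ) (lam : PartitionSeq) :
    fOp i (Finsupp.single lam 1) =
      (if h : ∃ mu : PartitionSeq, ∃ b : ℕ × ℕ,
          boxResidue b = i ∧ b ∉ lam.diagram ∧ mu.diagram = lam.diagram ∪ {b} then
        Finsupp.single h.choose 1
      else 0) := by
  classical
  rw [fOp, Finsupp.lift_apply, Finsupp.sum_single_index (by simp), one_smul]

open Classical in
theorem eOp_single_eq (i : ℤ) (lam : PartitionSeq) :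
    eOp i (Finsupp.single lam 1) =
      (if h : ∃ mu : PartitionSeq, ∃ b : ℕ × ℕ,
          boxResidue b = i ∧ b ∈ lam.diagram ∧ mu.diagram = lam.diagram \ {b} then
        Finsupp.single h.choose 1
      else 0) := by
  classical
  rw [eOp, Finsupp.lift_apply, Finsupp.sum_single_index (by simp), one_smul]

theorem fOp_single_of {lam : PartitionSeq} {i : ℤ} {y : ℕ} (h : lam.AddAt i y) :
    fOp i (Finsupp.single lam 1) = Finsupp.single (lam.addRow y h.1) 1 := by
  classical
  rw [fOp_single_eq]
  have hex : ∃ mu : PartitionSeq, ∃ b : ℕ × ℕ,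
      boxResidue b = i ∧ b ∉ lam.diagram ∧ mu.diagram = lam.diagram ∪ {b} :=
    ⟨lam.addRow y h.1, (lam.part y, y), by simpa [boxResidue] using h.2,
      by simp [diagram], addRow_diagram h.1⟩
  rw [dif_pos hex]
  obtain ⟨b, hres, hnot, hdiag⟩ := hex.choose_spec
  obtain ⟨hb1, hcond, hmu⟩ := add_spec hnot hdiag
  have hres' : (lam.part b.2 : ℤ) - b.2 = i := by
    rw [← hb1]; exact hres
  have hby : b.2 = y := lam.res_inj (hres'.trans h.2.symm)
  subst hby
  rw [hmu]

theorem fOp_single_zero {lam : PartitionSeq} {i : ℤ} (h : ∀ y, ¬ lam.AddAt i y) :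
    fOp i (Finsupp.single lam 1) = 0 := by
  classical
  rw [fOp_single_eq, dif_neg]
  rintro ⟨mu, b, hres, hnot, hdiag⟩
  obtain ⟨hb1, hcond, -⟩ := add_spec hnot hdiag
  exact h b.2 ⟨hcond, by rw [← hb1]; exact hres⟩

theorem eOp_single_of {lam : PartitionSeq} {i : ℤ} {y : ℕ} (h : lam.RemAt i y) :
    eOp i (Finsupp.single lam 1) = Finsupp.single (lam.remRow y h.1) 1 := by
  classical
  rw [eOp_single_eq]
  have hy1 : 1 ≤ lam.part y := by
    have : lam.part (y + 1) < lam.part y := h.1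
    omega
  have hex : ∃ mu : PartitionSeq, ∃ b : ℕ × ℕ,
      boxResidue b = i ∧ b ∈ lam.diagram ∧ mu.diagram = lam.diagram \ {b} :=
    ⟨lam.remRow y h.1, (lam.part y - 1, y), by
        have := h.2
        simp only [boxResidue]
        push_cast [hy1]
        omega,
      by simp only [diagram, Set.mem_setOf_eq]; omega, remRow_diagram h.1⟩
  rw [dif_pos hex]
  obtain ⟨b, hres, hmem, hdiag⟩ := hex.choose_spec
  obtain ⟨hb1, hcond, hnu⟩ := rem_spec hmem hdiag
  have hres' : (lam.part b.2 : ℤ) - 1 - b.2 = i := by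
    have : (b.1 : ℤ) = (lam.part b.2 : ℤ) - 1 := by omega
    rw [← hres]; simp only [boxResidue]; omega
  have hby : b.2 = y := by
    apply lam.res_inj
    have := h.2
    omega
  subst hby
  rw [hnu]

theorem eOp_single_zero {lam : PartitionSeq} {i : ℤ} (h : ∀ y, ¬ lam.RemAt i y) :
    eOp i (Finsupp.single lam 1) = 0 := by
  classical
  rw [eOp_single_eq, dif_neg]
  rintro ⟨mu, b, hres, hmem, hdiag⟩
  obtain ⟨hb1, hcond, -⟩ := rem_spec hmem hdiag
  refine h b.2 ⟨hcond, ?_⟩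
  have : (b.1 : ℤ) - b.2 = i := hres
  omega
namespace PartitionSeq

/-- After adding a box of residue `i`, there is no addable box of residue `i`. -/
theorem addAt_addRow_self {lam : PartitionSeq} {i : ℤ} {y : ℕ} (h : lam.AddAt i y) (w : ℕ) :
    ¬ (lam.addRow y h.1).AddAt i w := by
  rintro ⟨hc, hres⟩
  have hpy := h.2
  by_cases hw : w = y
  · subst hw
    rw [addRow_part_self] at hres
    push_cast at hres
    omega
  · rw [addRow_part_ne h.1 hw] at hres
    exact hw (lam.res_inj (hres.trans hpy.symm))

/-- After removing a box of residue `i`, there is no removable box of residue `i`. -/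
theorem remAt_remRow_self {lam : PartitionSeq} {i : ℤ} {y : ℕ} (h : lam.RemAt i y) (w : ℕ) :
    ¬ (lam.remRow y h.1).RemAt i w := by
  rintro ⟨hc, hres⟩
  have hpy := h.2
  have hy1 : 1 ≤ lam.part y := by have : lam.part (y + 1) < lam.part y := h.1; omega
  by_cases hw : w = y
  · subst hw
    rw [remRow_part_self] at hres
    omega
  · rw [remRow_part_ne h.1 hw] at hres
    refine hw (lam.res_inj ?_)
    omega

/-- Adding a box of residue `i` does not change addability of boxes of residue `j`,
for `j ∉ {i-1, i, i+1}`. -/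
theorem addAt_addRow_iff {lam : PartitionSeq} {i j : ℤ} {y : ℕ}
    (hj1 : j ≠ i - 1) (hj2 : j ≠ i) (hj3 : j ≠ i + 1)
    (hy : lam.AddAt i y) (w : ℕ) :
    (lam.addRow y hy.1).AddAt j w ↔ lam.AddAt j w := by
  have hpy := hy.2
  constructor
  · rintro ⟨hc, hres⟩
    have hw : w ≠ y := by
      rintro rfl
      rw [addRow_part_self] at hres
      push_cast at hres
      omega
    rw [addRow_part_ne hy.1 hw] at hres
    refine ⟨?_, hres⟩
    by_cases hw0 : w = 0
    · exact Or.inl hw0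
    · rcases hc with h0 | hlt
      · exact Or.inl h0
      · right
        have hw1 : w - 1 ≠ w := by omega
        rw [addRow_part_ne hy.1 hw] at hlt
        by_cases hwy : w - 1 = y
        · rw [hwy, addRow_part_self] at hlt
          rw [hwy]
          omega
        · rw [addRow_part_ne hy.1 hwy] at hlt
          exact hlt
  · rintro ⟨hc, hres⟩
    have hw : w ≠ y := by
      rintro rfl
      omega
    refine ⟨?_, by rw [addRow_part_ne hy.1 hw]; exact hres⟩
    by_cases hw0 : w = 0
    · exact Or.inl hw0
    · rcases hc with h0 | hlt
      · exact Or.inl h0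
      · right
        rw [addRow_part_ne hy.1 hw]
        by_cases hwy : w - 1 = y
        · rw [hwy, addRow_part_self]
          rw [← hwy] at hpy ⊢
          omega
        · rw [addRow_part_ne hy.1 hwy]
          exact hlt

end PartitionSeq
namespace PartitionSeq

/-- Removing a box of residue `i` does not change removability of boxes of residue `j`,
for `j ∉ {i-1, i, i+1}`. -/
theorem remAt_remRow_iff {lam : PartitionSeq} {i j : ℤ} {y : ℕ}
    (hj1 : j ≠ i - 1) (hj2 : j ≠ i) (hj3 : j ≠ i + 1)
    (hy : lam.RemAt i y) (w : ℕ) :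
    (lam.remRow y hy.1).RemAt j w ↔ lam.RemAt j w := by
  have hpy := hy.2
  have hy1 : 1 ≤ lam.part y := by have : lam.part (y + 1) < lam.part y := hy.1; omega
  constructor
  · rintro ⟨hc, hres⟩
    have hw : w ≠ y := by
      rintro rfl
      rw [remRow_part_self] at hres
      omega
    rw [remRow_part_ne hy.1 hw] at hres
    refine ⟨?_, hres⟩
    have hc' : (lam.remRow y hy.1).part (w + 1) < (lam.remRow y hy.1).part w := hc
    rw [remRow_part_ne hy.1 hw] at hc'
    show lam.part (w + 1) < lam.part w
    by_cases hwy : w + 1 = y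
    · rw [hwy, remRow_part_self] at hc'
      rw [hwy]
      omega
    · rw [remRow_part_ne hy.1 hwy] at hc'
      exact hc'
  · rintro ⟨hc, hres⟩
    have hw : w ≠ y := by
      rintro rfl
      omega
    have hc' : lam.part (w + 1) < lam.part w := hc
    refine ⟨?_, by rw [remRow_part_ne hy.1 hw]; exact hres⟩
    show (lam.remRow y hy.1).part (w + 1) < (lam.remRow y hy.1).part w
    rw [remRow_part_ne hy.1 hw]
    by_cases hwy : w + 1 = y
    · rw [hwy, remRow_part_self]
      rw [hwy] at hc'
      omega
    · rw [remRow_part_ne hy.1 hwy]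
      exact hc'

/-- `f_i f_j f_i = 0` for `|i - j| = 1`. -/
theorem triple_f {lam : PartitionSeq} {i j : ℤ} (hij : j = i + 1 ∨ j = i - 1)
    {y z : ℕ} (hy : lam.AddAt i y) (hz : (lam.addRow y hy.1).AddAt j z) (w : ℕ) :
    ¬ ((lam.addRow y hy.1).addRow z hz.1).AddAt i w := by
  have hpy := hy.2
  rintro ⟨hc, hres⟩
  by_cases hzy : z = y
  · -- the second box was added on top of... right of the first, j = i + 1
    subst hzy
    have hpz := hz.2
    rw [addRow_part_self] at hpz
    by_cases hwy : w = z
    · subst hwy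
      rw [addRow_part_self, addRow_part_self] at hres
      push_cast at hres hpz
      omega
    · rw [addRow_part_ne hz.1 hwy, addRow_part_ne hy.1 hwy] at hres
      exact hwy (lam.res_inj (hres.trans hpy.symm))
  · have hpz : (lam.part z : ℤ) - z = j := by
      have := hz.2
      rwa [addRow_part_ne hy.1 hzy] at this
    by_cases hwy : w = y
    · subst hwy
      rw [addRow_part_ne hz.1 (fun e => hzy e.symm), addRow_part_self] at hres
      push_cast at hres
      omega
    · by_cases hwz : w = z
      · subst hwz
        rw [addRow_part_self, addRow_part_ne hy.1 hzy] at hres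
        push_cast at hres
        -- hres : lam.part w + 1 - w = i, hpz : lam.part w - w = j, so j = i - 1
        have hj : j = i - 1 := by omega
        rcases hc with h0 | hlt
        · -- w = 0 : impossible since lam.part 0 ≥ lam.part y
          subst h0
          have ha := lam.anti (Nat.zero_le y)
          omega
        · rcases Nat.eq_zero_or_pos w with hw0 | hw0
          · subst hw0
            simp only [Nat.zero_sub, lt_irrefl] at hlt
          · have hww : w - 1 ≠ w := by omega
            have em : (lam.addRow y hy.1).part w = lam.part w := addRow_part_ne hy.1 hzy
            rw [addRow_part_self] at hlt
            by_cases hwy1 : w - 1 = y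
            · rw [addRow_part_ne hz.1 hww, hwy1, addRow_part_self] at hlt
              omega
            · rw [addRow_part_ne hz.1 hww, addRow_part_ne hy.1 hwy1] at hlt
              have h1 : y < w := by
                by_contra hcon
                push_neg at hcon
                have := lam.res_lt (show w < y by omega)
                omega
              have h2 := lam.res_lt (show y < w - 1 by omega)
              omega
      · rw [addRow_part_ne hz.1 hwz, addRow_part_ne hy.1 hwy] at hres
        exact hwy (lam.res_inj (hres.trans hpy.symm))

/-- `e_i e_j e_i = 0` for `|i - j| = 1`. -/
theorem triple_e {lam : PartitionSeq} {i j : ℤ} (hij : j = i + 1 ∨ j = i - 1)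
    {y z : ℕ} (hy : lam.RemAt i y) (hz : (lam.remRow y hy.1).RemAt j z) (w : ℕ) :
    ¬ ((lam.remRow y hy.1).remRow z hz.1).RemAt i w := by
  have hpy := hy.2
  have hy1 : 1 ≤ lam.part y := by have : lam.part (y + 1) < lam.part y := hy.1; omega
  rintro ⟨hc, hres⟩
  by_cases hzy : z = y
  · subst hzy
    have hpz := hz.2
    rw [remRow_part_self] at hpz
    have hz2 : 2 ≤ lam.part z := by
      have h' : (lam.remRow z hy.1).part (z + 1) < (lam.remRow z hy.1).part z := hz.1
      rw [remRow_part_self] at h'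
      omega
    by_cases hwy : w = z
    · subst hwy
      rw [remRow_part_self, remRow_part_self] at hres
      omega
    · rw [remRow_part_ne hz.1 hwy, remRow_part_ne hy.1 hwy] at hres
      refine hwy (lam.res_inj ?_)
      omega
  · have hpz : (lam.part z : ℤ) - 1 - z = j := by
      have := hz.2
      rwa [remRow_part_ne hy.1 hzy] at this
    have hz1 : 1 ≤ lam.part z := by
      have h' : (lam.remRow y hy.1).part (z + 1) < (lam.remRow y hy.1).part z := hz.1
      rw [remRow_part_ne hy.1 hzy] at h'
      omega
    by_cases hwy : w = y
    · subst hwy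
      rw [remRow_part_ne hz.1 (fun e => hzy e.symm), remRow_part_self] at hres
      omega
    · by_cases hwz : w = z
      · subst hwz
        rw [remRow_part_self, remRow_part_ne hy.1 hzy] at hres
        have hj : j = i + 1 := by omega
        have hlt : ((lam.remRow y hy.1).remRow w hz.1).part (w + 1)
            < ((lam.remRow y hy.1).remRow w hz.1).part w := hc
        have hww : w + 1 ≠ w := by omega
        have e0 : ((lam.remRow y hy.1).remRow w hz.1).part w
            = (lam.remRow y hy.1).part w - 1 := remRow_part_self hz.1
        have em : (lam.remRow y hy.1).part w = lam.part w := remRow_part_ne hy.1 hzy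
        have e1 : ((lam.remRow y hy.1).remRow w hz.1).part (w + 1)
            = (lam.remRow y hy.1).part (w + 1) := remRow_part_ne hz.1 hww
        by_cases hwy1 : w + 1 = y
        · have e2 : (lam.remRow y hy.1).part (w + 1) = lam.part y - 1 := by
            rw [hwy1, remRow_part_self]
          omega
        · have e2 : (lam.remRow y hy.1).part (w + 1) = lam.part (w + 1) :=
            remRow_part_ne hy.1 hwy1
          have h1 : w < y := by
            by_contra hcon
            push_neg at hcon
            have := lam.res_lt (show y < w by omega)
            omega
          have h2 := lam.res_lt (show w + 1 < y by omega)
          omega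
      · rw [remRow_part_ne hz.1 hwz, remRow_part_ne hy.1 hwy] at hres
        refine hwy (lam.res_inj ?_)
        omega

end PartitionSeq
open PartitionSeq

theorem f_sq_single (i : ℤ) (lam : PartitionSeq) :
    fOp i (fOp i (Finsupp.single lam 1)) = 0 := by
  by_cases h : ∃ y, lam.AddAt i y
  · obtain ⟨y, hy⟩ := h
    rw [fOp_single_of hy, fOp_single_zero (addAt_addRow_self hy)]
  · rw [fOp_single_zero (fun y hy => h ⟨y, hy⟩), map_zero]

theorem e_sq_single (i : ℤ) (lam : PartitionSeq) :
    eOp i (eOp i (Finsupp.single lam 1)) = 0 := by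
  by_cases h : ∃ y, lam.RemAt i y
  · obtain ⟨y, hy⟩ := h
    rw [eOp_single_of hy, eOp_single_zero (remAt_remRow_self hy)]
  · rw [eOp_single_zero (fun y hy => h ⟨y, hy⟩), map_zero]

theorem f_triple_single {i j : ℤ} (hij : j = i + 1 ∨ j = i - 1) (lam : PartitionSeq) :
    fOp i (fOp j (fOp i (Finsupp.single lam 1))) = 0 := by
  by_cases h : ∃ y, lam.AddAt i y
  · obtain ⟨y, hy⟩ := h
    rw [fOp_single_of hy]
    by_cases h2 : ∃ z, (lam.addRow y hy.1).AddAt j z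
    · obtain ⟨z, hz⟩ := h2
      rw [fOp_single_of hz, fOp_single_zero (triple_f hij hy hz)]
    · rw [fOp_single_zero (fun z hz => h2 ⟨z, hz⟩), map_zero]
  · rw [fOp_single_zero (fun y hy => h ⟨y, hy⟩), map_zero, map_zero]

theorem e_triple_single {i j : ℤ} (hij : j = i + 1 ∨ j = i - 1) (lam : PartitionSeq) :
    eOp i (eOp j (eOp i (Finsupp.single lam 1))) = 0 := by
  by_cases h : ∃ y, lam.RemAt i y
  · obtain ⟨y, hy⟩ := h
    rw [eOp_single_of hy]
    by_cases h2 : ∃ z, (lam.remRow y hy.1).RemAt j z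
    · obtain ⟨z, hz⟩ := h2
      rw [eOp_single_of hz, eOp_single_zero (triple_e hij hy hz)]
    · rw [eOp_single_zero (fun z hz => h2 ⟨z, hz⟩), map_zero]
  · rw [eOp_single_zero (fun y hy => h ⟨y, hy⟩), map_zero, map_zero]

theorem f_comm_single {i j : ℤ} (h1 : i ≠ j - 1) (h2 : i ≠ j) (h3 : i ≠ j + 1)
    (lam : PartitionSeq) :
    fOp i (fOp j (Finsupp.single lam 1)) = fOp j (fOp i (Finsupp.single lam 1)) := by
  have g1 : j ≠ i - 1 := by omega
  have g2 : j ≠ i := by omega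
  have g3 : j ≠ i + 1 := by omega
  by_cases hj : ∃ z, lam.AddAt j z
  · obtain ⟨z, hz⟩ := hj
    by_cases hi : ∃ y, lam.AddAt i y
    · obtain ⟨y, hy⟩ := hi
      have hyz : y ≠ z := by
        intro e; subst e
        exact h2 (hy.2.symm.trans hz.2 ▸ (hy.2.symm.trans hz.2).symm ▸ rfl)
      have hz' : (lam.addRow y hy.1).AddAt j z := (addAt_addRow_iff g1 g2 g3 hy z).mpr hz
      have hy' : (lam.addRow z hz.1).AddAt i y := (addAt_addRow_iff h1 h2 h3 hz y).mpr hy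
      rw [fOp_single_of hz, fOp_single_of hy', fOp_single_of hy, fOp_single_of hz']
      congr 1
      apply ext'
      funext k
      by_cases hky : k = y
      · subst hky
        rw [addRow_part_self, addRow_part_ne hz'.1 hyz, addRow_part_ne hz.1 hyz,
          addRow_part_self]
      · by_cases hkz : k = z
        · subst hkz
          rw [addRow_part_ne hy'.1 (fun e => hyz e.symm), addRow_part_self,
            addRow_part_self, addRow_part_ne hy.1 (fun e => hyz e.symm)]
        · rw [addRow_part_ne hy'.1 hky, addRow_part_ne hz.1 hkz,
            addRow_part_ne hz'.1 hkz, addRow_part_ne hy.1 hky]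
    · have hi' : ∀ y, ¬ (lam.addRow z hz.1).AddAt i y :=
        fun y hy' => hi ⟨y, (addAt_addRow_iff h1 h2 h3 hz y).mp hy'⟩
      rw [fOp_single_of hz, fOp_single_zero hi',
        fOp_single_zero (fun y hy => hi ⟨y, hy⟩), map_zero]
  · have hj' : ∀ z, ¬ lam.AddAt j z := fun z hz => hj ⟨z, hz⟩
    rw [fOp_single_zero hj', map_zero]
    by_cases hi : ∃ y, lam.AddAt i y
    · obtain ⟨y, hy⟩ := hi
      rw [fOp_single_of hy,
        fOp_single_zero (fun z hz' => hj' z ((addAt_addRow_iff g1 g2 g3 hy z).mp hz'))]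
    · rw [fOp_single_zero (fun y hy => hi ⟨y, hy⟩), map_zero]

theorem e_comm_single {i j : ℤ} (h1 : i ≠ j - 1) (h2 : i ≠ j) (h3 : i ≠ j + 1)
    (lam : PartitionSeq) :
    eOp i (eOp j (Finsupp.single lam 1)) = eOp j (eOp i (Finsupp.single lam 1)) := by
  have g1 : j ≠ i - 1 := by omega
  have g2 : j ≠ i := by omega
  have g3 : j ≠ i + 1 := by omega
  by_cases hj : ∃ z, lam.RemAt j z
  · obtain ⟨z, hz⟩ := hj
    by_cases hi : ∃ y, lam.RemAt i y
    · obtain ⟨y, hy⟩ := hi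
      have hyz : y ≠ z := by
        intro e; subst e
        have := hy.2.symm.trans hz.2
        exact h2 this
      have hz' : (lam.remRow y hy.1).RemAt j z := (remAt_remRow_iff g1 g2 g3 hy z).mpr hz
      have hy' : (lam.remRow z hz.1).RemAt i y := (remAt_remRow_iff h1 h2 h3 hz y).mpr hy
      rw [eOp_single_of hz, eOp_single_of hy', eOp_single_of hy, eOp_single_of hz']
      congr 1
      apply ext'
      funext k
      by_cases hky : k = y
      · subst hky
        rw [remRow_part_self, remRow_part_ne hz'.1 hyz, remRow_part_ne hz.1 hyz,
          remRow_part_self]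
      · by_cases hkz : k = z
        · subst hkz
          rw [remRow_part_ne hy'.1 (fun e => hyz e.symm), remRow_part_self,
            remRow_part_self, remRow_part_ne hy.1 (fun e => hyz e.symm)]
        · rw [remRow_part_ne hy'.1 hky, remRow_part_ne hz.1 hkz,
            remRow_part_ne hz'.1 hkz, remRow_part_ne hy.1 hky]
    · have hi' : ∀ y, ¬ (lam.remRow z hz.1).RemAt i y :=
        fun y hy' => hi ⟨y, (remAt_remRow_iff h1 h2 h3 hz y).mp hy'⟩
      rw [eOp_single_of hz, eOp_single_zero hi',
        eOp_single_zero (fun y hy => hi ⟨y, hy⟩), map_zero]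
  · have hj' : ∀ z, ¬ lam.RemAt j z := fun z hz => hj ⟨z, hz⟩
    rw [eOp_single_zero hj', map_zero]
    by_cases hi : ∃ y, lam.RemAt i y
    · obtain ⟨y, hy⟩ := hi
      rw [eOp_single_of hy,
        eOp_single_zero (fun z hz' => hj' z ((remAt_remRow_iff g1 g2 g3 hy z).mp hz'))]
    · rw [eOp_single_zero (fun y hy => hi ⟨y, hy⟩), map_zero]

/-- the box-removal and box-addition operators satisfy the Serre relations
of `sl_∞`: for `|i − j| ≥ 2` they commute, and for `|i − j| = 1` one has
`e_i² e_j − 2 e_i e_j e_i + e_j e_i² = 0` and `f_i² f_j − 2 f_i f_j f_i + f_j f_i² = 0`.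
Together with the Chevalley relations this makes the free vector space on partitions the
basic representation `L(ω_0)` of `sl_∞`. -/
theorem serre_relations (i j : ℤ) :
    (2 ≤ |i - j| →
      eOp i ∘ₗ eOp j = eOp j ∘ₗ eOp i ∧ fOp i ∘ₗ fOp j = fOp j ∘ₗ fOp i) ∧
    (|i - j| = 1 →
      (eOp i ∘ₗ eOp i ∘ₗ eOp j - (2 : ℂ) • (eOp i ∘ₗ eOp j ∘ₗ eOp i)
        + eOp j ∘ₗ eOp i ∘ₗ eOp i = 0) ∧
      (fOp i ∘ₗ fOp i ∘ₗ fOp j - (2 : ℂ) • (fOp i ∘ₗ fOp j ∘ₗ fOp i)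
        + fOp j ∘ₗ fOp i ∘ₗ fOp i = 0)) := by
  constructor
  · intro habs
    have hne : i ≠ j - 1 ∧ i ≠ j ∧ i ≠ j + 1 := by
      rcases le_abs.mp habs with h | h <;> omega
    obtain ⟨h1, h2, h3⟩ := hne
    constructor
    · apply Finsupp.lhom_ext
      intro lam c
      have hc : (Finsupp.single lam c : PartSpace) = c • Finsupp.single lam 1 := by
        rw [Finsupp.smul_single, smul_eq_mul, mul_one]
      simp only [LinearMap.comp_apply, hc, map_smul]
      rw [e_comm_single h1 h2 h3 lam]
    · apply Finsupp.lhom_ext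
      intro lam c
      have hc : (Finsupp.single lam c : PartSpace) = c • Finsupp.single lam 1 := by
        rw [Finsupp.smul_single, smul_eq_mul, mul_one]
      simp only [LinearMap.comp_apply, hc, map_smul]
      rw [f_comm_single h1 h2 h3 lam]
  · intro habs
    have hij : j = i + 1 ∨ j = i - 1 := by
      rcases (abs_eq (by norm_num : (0:ℤ) ≤ 1)).mp habs with h | h
      · right; omega
      · left; omega
    constructor
    · apply Finsupp.lhom_ext
      intro lam c
      have hc : (Finsupp.single lam c : PartSpace) = c • Finsupp.single lam 1 := by
        rw [Finsupp.smul_single, smul_eq_mul, mul_one]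
      have t1 : eOp i (eOp i (eOp j (Finsupp.single lam 1))) = 0 := by
        by_cases h : ∃ z, lam.RemAt j z
        · obtain ⟨z, hz⟩ := h
          rw [eOp_single_of hz, e_sq_single]
        · rw [eOp_single_zero (fun z hz => h ⟨z, hz⟩), map_zero, map_zero]
      have t2 : eOp i (eOp j (eOp i (Finsupp.single lam 1))) = 0 := e_triple_single hij lam
      have t3 : eOp j (eOp i (eOp i (Finsupp.single lam 1))) = 0 := by
        rw [e_sq_single, map_zero]
      simp only [LinearMap.sub_apply, LinearMap.add_apply, LinearMap.smul_apply,
        LinearMap.comp_apply, LinearMap.zero_apply, hc, map_smul, t1, t2, t3]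
      simp
    · apply Finsupp.lhom_ext
      intro lam c
      have hc : (Finsupp.single lam c : PartSpace) = c • Finsupp.single lam 1 := by
        rw [Finsupp.smul_single, smul_eq_mul, mul_one]
      have t1 : fOp i (fOp i (fOp j (Finsupp.single lam 1))) = 0 := by
        by_cases h : ∃ z, lam.AddAt j z
        · obtain ⟨z, hz⟩ := h
          rw [fOp_single_of hz, f_sq_single]
        · rw [fOp_single_zero (fun z hz => h ⟨z, hz⟩), map_zero, map_zero]
      have t2 : fOp i (fOp j (fOp i (Finsupp.single lam 1))) = 0 := f_triple_single hij lam
      have t3 : fOp j (fOp i (fOp i (Finsupp.single lam 1))) = 0 := by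
        rw [f_sq_single, map_zero]
      simp only [LinearMap.sub_apply, LinearMap.add_apply, LinearMap.smul_apply,
        LinearMap.comp_apply, LinearMap.zero_apply, hc, map_smul, t1, t2, t3]
      simp
end
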